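/- If a partition of a finite DAG is built by a sequence of merges where each merge combines two current blocks A and B such that there is an edge from some a ∈ A to some b ∈ B in the current quotient and the quotient's topological stages of A and B differ by exactly 1, then the final quotient graph is acyclic. -/
import Mathlib


variable {V : Type*}

/-- A directed path of length `k` (number of edges) from `u` to `v` in the digraph `E`. -/
def IsPathOfLength (E : V → V → Prop) (u v : V) (k : ℕ) : Prop :=
  ∃ f : Fin (k + 1) → V, f 0 = u ∧ f (Fin.last k) = v ∧
    ∀ i : Fin k, E (f i.castSucc) (f i.succ)

/-- A directed graph (relation) is acyclic: no nontrivial directed cycle. -/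
def Acyclic (E : V → V → Prop) : Prop := ∀ v, ¬ Relation.TransGen E v v

/-- `ts` is the topological-stage function of `E`: `ts v` is the length of the
longest directed path in `E` ending at `v`. -/
def IsTopStage (E : V → V → Prop) (ts : V → ℕ) : Prop :=
  ∀ v, IsGreatest {k | ∃ u, IsPathOfLength E u v k} (ts v)

/-- Contraction of the pair {u, v} in the digraph `E`: v is identified with u
(every endpoint equal to v is redirected to u) and self-loops are removed. -/
def ContractRel [DecidableEq V] (E : V → V → Prop) (u v : V) (x y : V) : Prop :=
  x ≠ y ∧ ∃ a b : V, E a b ∧ (if a = v then u else a) = x ∧ (if b = v then u else b) = y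

/-- One merge step of the iterated-contraction process: contract two nodes A, B
of the current quotient graph Q that are joined by an edge A → B and whose
topological stages in Q differ by exactly one. -/
def MergeQuotStep [DecidableEq V] (Q Q' : V → V → Prop) : Prop :=
  ∃ A B : V, ∃ tsQ : V → ℕ, IsTopStage Q tsQ ∧ Q A B ∧
    |(tsQ A : ℤ) - (tsQ B : ℤ)| = 1 ∧ Q' = ContractRel Q A B

lemma isPathOfLength_snoc {E : V → V → Prop} {u x y : V} {k : ℕ}
    (h : IsPathOfLength E u x k) (hxy : E x y) : IsPathOfLength E u y (k + 1) := by
  obtain ⟨f, h0, hl, he⟩ := h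
  refine ⟨Fin.snoc f y, ?_, Fin.snoc_last _ _, ?_⟩
  · rw [show (0 : Fin (k + 2)) = (0 : Fin (k + 1)).castSucc from rfl, Fin.snoc_castSucc, h0]
  · intro i
    refine Fin.lastCases ?_ ?_ i
    · rw [Fin.snoc_castSucc, hl, Fin.succ_last, Fin.snoc_last]
      exact hxy
    · intro j
      rw [Fin.snoc_castSucc, Fin.succ_castSucc, Fin.snoc_castSucc]
      exact he j

lemma ts_lt_of_edge {E : V → V → Prop} {ts : V → ℕ} (hts : IsTopStage E ts)
    {x y : V} (hxy : E x y) : ts x < ts y := by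
  obtain ⟨u, hu⟩ := (hts x).1
  have : ts x + 1 ∈ {k | ∃ u, IsPathOfLength E u y k} :=
    ⟨u, isPathOfLength_snoc hu hxy⟩
  have := (hts y).2 this
  omega

lemma acyclic_of_mono {E : V → V → Prop} (f : V → ℕ)
    (hf : ∀ x y, E x y → f x < f y) : Acyclic E := by
  intro v hv
  have : ∀ a b, Relation.TransGen E a b → f a < f b := by
    intro a b hab
    induction hab with
    | single h => exact hf _ _ h
    | tail _ h ih => exact ih.trans (hf _ _ h)
  exact absurd (this v v hv) (lt_irrefl _)

lemma contract_acyclic [DecidableEq V] (Q : V → V → Prop) (ts : V → ℕ)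
    (hts : IsTopStage Q ts) (A B : V) (hAB : Q A B) (h1 : ts B = ts A + 1) :
    Acyclic (ContractRel Q A B) := by
  apply acyclic_of_mono (fun x => if x = A then 2 * ts A + 1 else 2 * ts x)
  rintro x y ⟨hxy, a, b, hab, hx, hy⟩
  have hab' : ts a < ts b := ts_lt_of_edge hts hab
  subst hx hy
  split_ifs at hxy ⊢ <;> subst_vars <;> first | omega | simp_all

/-- If a quotient of a finite DAG is built by a sequence of merges, each of
which contracts two adjacent blocks whose current topological stages differ by
exactly one, then the final quotient graph is acyclic. -/
theorem iterated_affix_merges_acyclic [Fintype V] [DecidableEq V]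
    (E Q : V → V → Prop) (hacyc : Acyclic E)
    (h : Relation.ReflTransGen MergeQuotStep E Q) :
    Acyclic Q := by
  induction h with
  | refl => exact hacyc
  | tail _ step ih =>
    obtain ⟨A, B, ts, hts, hAB, habs, rfl⟩ := step
    have hABlt : ts A < ts B := ts_lt_of_edge hts hAB
    have h1 : ts B = ts A + 1 := by
      rcases (abs_eq (by norm_num : (0:ℤ) ≤ 1)).mp habs with h | h <;> omega
    exact contract_acyclic _ ts hts A B hAB h1
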